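/- A triangulation T of a finite point set X in the plane is Delaunay (every triangle has an empty open circumdisc with respect to X) if and only if for every triangle of T, no vertex of any adjacent triangle lies in the open circumdisc of that triangle. -/

import Mathlib

noncomputable section

abbrev Pt := EuclideanSpace ℝ (Fin 2)

instance : DecidableEq Pt := Classical.decEq _

def GenPos (X : Finset Pt) : Prop :=
  (∀ s : Finset Pt, s ⊆ X → s.card = 3 → ¬ Collinear ℝ (s : Set Pt)) ∧
  (∀ s : Finset Pt, s ⊆ X → s.card = 4 → ¬ ∃ (c : Pt) (r : ℝ), ∀ p ∈ s, dist p c = r)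

structure IsTriangulation (X : Finset Pt) (T : Finset (Finset Pt)) : Prop where
  card : ∀ t ∈ T, t.card = 3
  verts : (⋃ t ∈ T, (t : Set Pt)) = (X : Set Pt)
  cover : (⋃ t ∈ T, convexHull ℝ (t : Set Pt)) = convexHull ℝ (X : Set Pt)
  inter : ∀ t ∈ T, ∀ t' ∈ T,
    convexHull ℝ (t : Set Pt) ∩ convexHull ℝ (t' : Set Pt)
      = convexHull ℝ ((t ∩ t' : Finset Pt) : Set Pt)

/-!
For a triangle `u` of `T` with circumcircle `Sᵤ`, let `πᵤ(p)` be the power of `p` with respect to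
`Sᵤ`. If triangles `u, v` share an edge `ab`, then `πᵤ - π_v` is an affine function vanishing at
`a` and `b`, and when the apex of `v` is not inside `Sᵤ` it is nonnegative on all of `v`. So on a
walk along a segment from a generic interior point `y` of `t` to a point `x ∈ X`, the power of `x`
with respect to the circumcircle of the current triangle does not increase when the walk crosses
an edge (genericity of `y` keeps the walk away from vertices). The walk ends in a triangle having
`x` as a vertex, where this power is `0`; hence `πₜ(x) ≥ 0`, i.e. `x` is not inside `Sₜ`.
-/

open Set Module AffineMap EuclideanGeometry RealInnerProductSpace MeasureTheory

theorem exists_mem_inter_Ioc_of_Ioc_subset_biUnion {α ι : Type*} [LinearOrder α]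
    [TopologicalSpace α] [OrderTopology α] [DenselyOrdered α] {s : Finset ι} {F : ι → Set α}
    (hF : ∀ i ∈ s, IsClosed (F i)) {a b : α} (hab : a < b) (h : Ioc a b ⊆ ⋃ i ∈ s, F i) :
    ∃ i ∈ s, a ∈ F i ∧ (F i ∩ Ioc a b).Nonempty := by
  have ha : a ∈ closure (⋃ i ∈ s, F i ∩ Ioc a b) := by
    rw [← iUnion₂_inter, inter_eq_right.mpr h, closure_Ioc hab.ne]
    exact left_mem_Icc.mpr hab.le
  rw [Finset.closure_biUnion, mem_iUnion₂] at ha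
  obtain ⟨i, hi, ha⟩ := ha
  refine ⟨i, hi, ?_, closure_nonempty_iff.mp ⟨a, ha⟩⟩
  exact (hF i hi).closure_subset (closure_mono inter_subset_left ha)

theorem Finset.exists_mem_segment_of_mem_convexHull {𝕜 E : Type*} [Field 𝕜] [LinearOrder 𝕜]
    [IsStrictOrderedRing 𝕜] [AddCommGroup E] [Module 𝕜 E] {s : Finset E} (hs : s.card ≤ 2) {p : E}
    (hp : p ∈ convexHull 𝕜 (s : Set E)) : ∃ a ∈ s, ∃ b ∈ s, p ∈ segment 𝕜 a b := by
  classical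
  interval_cases h : s.card
  · simp_all [Finset.card_eq_zero]
  · obtain ⟨a, rfl⟩ := Finset.card_eq_one.mp h
    exact ⟨a, by simp, a, by simp, by simpa using hp⟩
  · obtain ⟨a, b, -, rfl⟩ := Finset.card_eq_two.mp h
    exact ⟨a, by simp, b, by simp, by simpa [convexHull_pair] using hp⟩

theorem mem_affineSpan_pair_of_lineMap_eq {𝕜 E : Type*} [Field 𝕜] [AddCommGroup E] [Module 𝕜 E]
    {x y q : E} {s : 𝕜} (hs : s ≠ 1) (hq : lineMap y x s = q) : y ∈ line[𝕜, x, q] := by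
  have hy : lineMap x q (1 - s)⁻¹ = y := by
    have hs' : 1 - s ≠ 0 := sub_ne_zero.mpr hs.symm
    rw [← hq, lineMap_apply_module, lineMap_apply_module]
    match_scalars
    · field_simp
      ring
    · field_simp
  rw [← hy]
  exact lineMap_mem_affineSpan_pair _ _ _

section NormedSpace

variable {E : Type*} [NormedAddCommGroup E] [NormedSpace ℝ E]

theorem affineSpan_pair_ne_top (hE : 2 ≤ finrank ℝ E) (x q : E) : line[ℝ, x, q] ≠ ⊤ := by
  intro h
  have hdir : finrank ℝ (line[ℝ, x, q]).direction = finrank ℝ E := by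
    rw [h, AffineSubspace.direction_top, finrank_top]
  rw [direction_affineSpan, vectorSpan_pair, vsub_eq_sub] at hdir
  have := finrank_span_le_card (R := ℝ) ({x - q} : Set E)
  simp only [toFinset_singleton, Finset.card_singleton] at this
  omega

theorem IsOpen.exists_mem_forall_notMem_affineSpan_pair [FiniteDimensional ℝ E]
    (hE : 2 ≤ finrank ℝ E) {U : Set E} (hU : IsOpen U) (hne : U.Nonempty) (x : E) (X : Finset E) :
    ∃ y ∈ U, ∀ q ∈ X, y ∉ line[ℝ, x, q] := by
  borelize E
  by_contra! h
  have hnull : Measure.addHaar (⋃ q ∈ X, (line[ℝ, x, q] : Set E)) = 0 :=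
    (measure_biUnion_null_iff X.countable_toSet).2 fun q _ =>
      Measure.addHaar_affineSubspace _ _ (affineSpan_pair_ne_top hE x q)
  refine (hU.measure_pos Measure.addHaar hne).ne' <| measure_mono_null (fun y hy => ?_) hnull
  obtain ⟨q, hq, hy⟩ := h y hy
  exact mem_biUnion hq hy

theorem interior_convexHull_nonempty_of_not_collinear [FiniteDimensional ℝ E]
    (hE : finrank ℝ E = 2) {a b c : E} (h : ¬ Collinear ℝ {a, b, c}) :
    (interior (convexHull ℝ {a, b, c})).Nonempty := by
  have hind := affineIndependent_iff_not_collinear_set.mpr h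
  rw [interior_convexHull_nonempty_iff_affineSpan_eq_top]
  have hrange : range ![a, b, c] = {a, b, c} := by
    rw [Matrix.range_cons, Matrix.range_cons_cons_empty, singleton_union]
  rw [← hrange, hind.affineSpan_eq_top_iff_card_eq_finrank_add_one, hE, Fintype.card_fin]

end NormedSpace

theorem EuclideanGeometry.exists_sphere_of_not_collinear {V P : Type*} [NormedAddCommGroup V]
    [InnerProductSpace ℝ V] [MetricSpace P] [NormedAddTorsor V P] {a b c : P}
    (h : ¬ Collinear ℝ {a, b, c}) : ∃ S : Sphere P, a ∈ S ∧ b ∈ S ∧ c ∈ S :=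
  let S : Affine.Simplex ℝ P 2 := ⟨![a, b, c], affineIndependent_iff_not_collinear_set.mpr h⟩
  ⟨S.circumsphere, S.mem_circumsphere 0, S.mem_circumsphere 1, S.mem_circumsphere 2⟩

namespace EuclideanGeometry.Sphere

variable {V : Type*} [NormedAddCommGroup V] [InnerProductSpace ℝ V]

theorem power_eq_zero_of_mem {P : Type*} [MetricSpace P] {s : Sphere P} {p : P} (hp : p ∈ s) :
    s.power p = 0 := by
  rw [power, mem_sphere.mp hp, sub_self]

def powerSub (s₁ s₂ : Sphere V) : V →ᵃ[ℝ] ℝ where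
  toFun p := s₁.power p - s₂.power p
  linear := (2 : ℝ) • innerₛₗ ℝ (s₂.center - s₁.center)
  map_vadd' p v := by
    simp only [power, dist_eq_norm, vadd_eq_add, LinearMap.smul_apply, innerₛₗ_apply_apply,
      smul_eq_mul]
    rw [add_sub_assoc, add_sub_assoc, norm_add_sq_real, norm_add_sq_real, inner_sub_right,
      inner_sub_right, inner_sub_left, real_inner_comm p, real_inner_comm s₁.center,
      real_inner_comm s₂.center]
    ring

@[simp]
theorem powerSub_apply (s₁ s₂ : Sphere V) (p : V) : s₁.powerSub s₂ p = s₁.power p - s₂.power p :=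
  rfl

theorem power_le_power_of_lineMap_mem {u v : Sphere V} {S : Set V} {a b x y : V} {s₁ s₂ : ℝ}
    (ha : a ∈ u) (hb : b ∈ u) (ha' : a ∈ v) (hb' : b ∈ v) (hSv : ∀ w ∈ S, w ∈ v)
    (hSu : ∀ w ∈ S, 0 ≤ u.power w) (h₁ : lineMap y x s₁ ∈ segment ℝ a b)
    (h₂ : lineMap y x s₂ ∈ convexHull ℝ S) (hs : s₁ < s₂) (hs₂ : s₂ ≤ 1) :
    v.power x ≤ u.power x := by
  set D := u.powerSub v
  have hDS : convexHull ℝ S ⊆ D ⁻¹' Ici 0 := by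
    refine convexHull_min (fun w hw => ?_) ((convex_Ici 0).affine_preimage D)
    simp [D, power_eq_zero_of_mem (hSv w hw), hSu w hw]
  have hD₁ : D (lineMap y x s₁) = 0 := by
    rw [segment_eq_image_lineMap] at h₁
    obtain ⟨r, -, hr⟩ := h₁
    simp [← hr, D, D.apply_lineMap, power_eq_zero_of_mem, ha, hb, ha', hb']
  have hD₂ : 0 ≤ D (lineMap y x s₂) := hDS h₂
  rw [D.apply_lineMap, lineMap_apply_module, smul_eq_mul, smul_eq_mul] at hD₁ hD₂
  -- `s ↦ D (lineMap y x s)` is affine, zero at `s₁` and nonnegative at `s₂ > s₁`, so also at `1`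
  have : 0 ≤ D x := by nlinarith
  simpa [D] using this

end EuclideanGeometry.Sphere

namespace GenPos

variable {X : Finset Pt}

theorem not_collinear (hX : GenPos X) {a b c : Pt} (ha : a ∈ X) (hb : b ∈ X) (hc : c ∈ X)
    (hab : a ≠ b) (hac : a ≠ c) (hbc : b ≠ c) : ¬ Collinear ℝ {a, b, c} := by
  have h := hX.1 {a, b, c} (by simp [Finset.insert_subset_iff, ha, hb, hc])
    (Finset.card_eq_three.mpr ⟨a, b, c, hab, hac, hbc, rfl⟩)
  simpa using h

end GenPos

namespace IsTriangulation

variable {X : Finset Pt} {T : Finset (Finset Pt)} {t u v : Finset Pt}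

theorem subset_of_mem (hT : IsTriangulation X T) (ht : t ∈ T) : t ⊆ X :=
  Finset.coe_subset.mp <|
    hT.verts ▸ subset_biUnion_of_mem (u := fun t : Finset Pt => (t : Set Pt)) ht

theorem exists_mem_of_mem (hT : IsTriangulation X T) {x : Pt} (hx : x ∈ X) : ∃ t ∈ T, x ∈ t := by
  simpa [← hT.verts] using Finset.mem_coe.mpr hx

theorem exists_mem_convexHull (hT : IsTriangulation X T) {p : Pt}
    (hp : p ∈ convexHull ℝ (X : Set Pt)) : ∃ t ∈ T, p ∈ convexHull ℝ (t : Set Pt) := by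
  simpa [← hT.cover] using hp

theorem exists_eq_not_collinear (hX : GenPos X) (hT : IsTriangulation X T) (ht : t ∈ T) :
    ∃ a b c, t = {a, b, c} ∧ ¬ Collinear ℝ {a, b, c} := by
  obtain ⟨a, b, c, hab, hac, hbc, rfl⟩ := Finset.card_eq_three.mp (hT.card t ht)
  have hsub := hT.subset_of_mem ht
  refine ⟨a, b, c, rfl, hX.not_collinear (hsub ?_) (hsub ?_) (hsub ?_) hab hac hbc⟩ <;> simp

theorem exists_sphere (hX : GenPos X) (hT : IsTriangulation X T) (ht : t ∈ T) :
    ∃ S : Sphere Pt, ∀ w ∈ t, w ∈ S := by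
  obtain ⟨a, b, c, rfl, h⟩ := hT.exists_eq_not_collinear hX ht
  obtain ⟨S, ha, hb, hc⟩ := exists_sphere_of_not_collinear h
  exact ⟨S, by simp [ha, hb, hc]⟩

theorem interior_convexHull_nonempty (hX : GenPos X) (hT : IsTriangulation X T) (ht : t ∈ T) :
    (interior (convexHull ℝ (t : Set Pt))).Nonempty := by
  obtain ⟨a, b, c, rfl, h⟩ := hT.exists_eq_not_collinear hX ht
  simpa using interior_convexHull_nonempty_of_not_collinear finrank_euclideanSpace_fin h

theorem card_inter_le_two (hT : IsTriangulation X T) (hu : u ∈ T) (hv : v ∈ T) (huv : u ≠ v) :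
    (u ∩ v).card ≤ 2 := by
  by_contra! h
  have hcard : u.card ≤ (u ∩ v).card := by rw [hT.card u hu]; omega
  have hcard' : v.card ≤ (u ∩ v).card := by rw [hT.card v hv]; omega
  exact huv ((Finset.eq_of_subset_of_card_le Finset.inter_subset_left hcard).symm.trans
    (Finset.eq_of_subset_of_card_le Finset.inter_subset_right hcard'))

theorem exists_mem_segment (hT : IsTriangulation X T) (hu : u ∈ T) (hv : v ∈ T) (huv : u ≠ v)
    {p : Pt} (hpu : p ∈ convexHull ℝ (u : Set Pt)) (hpv : p ∈ convexHull ℝ (v : Set Pt)) :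
    ∃ a ∈ u ∩ v, ∃ b ∈ u ∩ v, p ∈ segment ℝ a b := by
  refine Finset.exists_mem_segment_of_mem_convexHull (hT.card_inter_le_two hu hv huv) ?_
  rw [← hT.inter u hu v hv]
  exact ⟨hpu, hpv⟩

theorem mem_of_mem_convexHull (hX : GenPos X) (hT : IsTriangulation X T) (hu : u ∈ T) {x : Pt}
    (hx : x ∈ X) (hxu : x ∈ convexHull ℝ (u : Set Pt)) : x ∈ u := by
  obtain ⟨w, hw, hxw⟩ := hT.exists_mem_of_mem hx
  obtain rfl | huw := eq_or_ne u w
  · exact hxw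
  obtain ⟨a, ha, b, hb, hab⟩ :=
    hT.exists_mem_segment hu hw huw hxu (subset_convexHull ℝ _ (Finset.mem_coe.mpr hxw))
  rw [Finset.mem_inter] at ha hb
  by_contra hxu'
  have hxa : x ≠ a := fun h => hxu' (h ▸ ha.1)
  have hxb : x ≠ b := fun h => hxu' (h ▸ hb.1)
  have hab' : a ≠ b := by rintro rfl; simp_all
  exact hX.not_collinear hx (hT.subset_of_mem hu ha.1) (hT.subset_of_mem hu hb.1) hxa hxb hab'
    (collinear_insert_of_mem_affineSpan_pair (mem_segment_iff_wbtw.mp hab).mem_affineSpan)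

end IsTriangulation

def IsLocallyDelaunay (T : Finset (Finset Pt)) : Prop :=
  ∀ t ∈ T, ∀ t' ∈ T, (t ∩ t').card = 2 →
    ∀ (c : Pt) (r : ℝ), (∀ v ∈ t, dist v c = r) → ∀ v ∈ t', dist v c < r → v ∈ t

namespace IsLocallyDelaunay

variable {X : Finset Pt} {T : Finset (Finset Pt)} {t u v : Finset Pt}

theorem power_nonneg (hloc : IsLocallyDelaunay T) (hu : u ∈ T) (hv : v ∈ T)
    (huv : (u ∩ v).card = 2) {S : Sphere Pt} (hS : ∀ w ∈ u, w ∈ S) {w : Pt} (hw : w ∈ v) :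
    0 ≤ S.power w := by
  by_cases hwu : w ∈ u
  · exact (Sphere.power_eq_zero_of_mem (hS w hwu)).ge
  obtain ⟨a, ha⟩ : (u ∩ v).Nonempty := Finset.card_pos.mp (by omega)
  have hr : 0 ≤ S.radius := mem_sphere.mp (hS a (Finset.mem_inter.mp ha).1) ▸ dist_nonneg
  rw [Sphere.power_nonneg_iff_radius_le_dist_center hr]
  exact not_lt.mp fun h => hwu <|
    hloc u hu v hv huv S.center S.radius (fun w hw => mem_sphere.mp (hS w hw)) w hw h

theorem exists_sphere_power_le_of_crossing (hloc : IsLocallyDelaunay T) (hX : GenPos X)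
    (hT : IsTriangulation X T) (hu : u ∈ T) (hv : v ∈ T) {Su : Sphere Pt} (hSu : ∀ w ∈ u, w ∈ Su)
    {x y : Pt} {s₁ s₂ : ℝ} (h₁u : lineMap y x s₁ ∈ convexHull ℝ (u : Set Pt))
    (h₁v : lineMap y x s₁ ∈ convexHull ℝ (v : Set Pt)) (h₁X : lineMap y x s₁ ∉ X)
    (h₂ : lineMap y x s₂ ∈ convexHull ℝ (v : Set Pt)) (hs : s₁ < s₂) (hs₂ : s₂ ≤ 1) :
    ∃ Sv : Sphere Pt, (∀ w ∈ v, w ∈ Sv) ∧ Sv.power x ≤ Su.power x := by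
  obtain rfl | huv := eq_or_ne u v
  · exact ⟨Su, hSu, le_rfl⟩
  obtain ⟨Sv, hSv⟩ := hT.exists_sphere hX hv
  obtain ⟨a, ha, b, hb, hab⟩ := hT.exists_mem_segment hu hv huv h₁u h₁v
  have hne : a ≠ b := by
    rintro rfl
    rw [segment_same, mem_singleton_iff] at hab
    exact h₁X (hab ▸ hT.subset_of_mem hu (Finset.mem_inter.mp ha).1)
  have hcard : (u ∩ v).card = 2 :=
    (hT.card_inter_le_two hu hv huv).antisymm (Finset.one_lt_card.mpr ⟨a, ha, b, hb, hne⟩)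
  rw [Finset.mem_inter] at ha hb
  exact ⟨Sv, hSv, Sphere.power_le_power_of_lineMap_mem (hSu a ha.1) (hSu b hb.1) (hSv a ha.2)
    (hSv b hb.2) hSv (fun w hw => hloc.power_nonneg hu hv hcard hSu hw) hab h₂ hs hs₂⟩

theorem exists_sphere_power_le_of_segment (hloc : IsLocallyDelaunay T) (hX : GenPos X)
    (hT : IsTriangulation X T) (ht : t ∈ T) {S : Sphere Pt} (hS : ∀ w ∈ t, w ∈ S) {x y : Pt}
    (hy : y ∈ convexHull ℝ (t : Set Pt)) (hx : x ∈ convexHull ℝ (X : Set Pt))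
    (hyx : ∀ s : ℝ, s < 1 → lineMap y x s ∉ X) :
    ∃ u ∈ T, x ∈ convexHull ℝ (u : Set Pt) ∧
      ∃ Su : Sphere Pt, (∀ w ∈ u, w ∈ Su) ∧ Su.power x ≤ S.power x := by
  classical
  set γ : ℝ → Pt := fun s => lineMap y x s
  have hγ (s : ℝ) (hs₀ : 0 ≤ s) (hs₁ : s ≤ 1) : ∃ v ∈ T, γ s ∈ convexHull ℝ (v : Set Pt) :=
    hT.exists_mem_convexHull <| (convex_convexHull ℝ _).lineMap_mem
      (convexHull_mono (Finset.coe_subset.mpr (hT.subset_of_mem ht)) hy) hx ⟨hs₀, hs₁⟩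
  have hclosed (u : Finset Pt) : IsClosed (γ ⁻¹' convexHull ℝ (u : Set Pt)) :=
    (u.finite_toSet.isClosed_convexHull ℝ).preimage lineMap_continuous
  let good := T.filter fun u => ∃ Su : Sphere Pt, (∀ w ∈ u, w ∈ Su) ∧ Su.power x ≤ S.power x
  have hwalk : Icc 0 1 ⊆ ⋃ u ∈ good, γ ⁻¹' convexHull ℝ (u : Set Pt) := by
    refine IsClosed.Icc_subset_of_forall_exists_gt
      ((isClosed_biUnion_finset fun u _ => hclosed u).inter isClosed_Icc)
      (mem_iUnion₂.mpr ⟨t, Finset.mem_filter.mpr ⟨ht, S, hS, le_rfl⟩, by simpa [γ] using hy⟩) ?_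
    rintro σ ⟨hσ, hσ₀, hσ₁⟩ z hz
    obtain ⟨u, hu, hσu⟩ := mem_iUnion₂.mp hσ
    obtain ⟨hu, Su, hSu, hle⟩ := Finset.mem_filter.mp hu
    obtain ⟨v, hv, hσv, s, hsv, hs⟩ := exists_mem_inter_Ioc_of_Ioc_subset_biUnion (s := T)
      (fun v _ => hclosed v) (lt_min hz hσ₁) fun s hs => by
        obtain ⟨v, hv, hsv⟩ := hγ s (by linarith [hs.1]) (hs.2.trans (min_le_right _ _))
        exact mem_biUnion hv hsv
    obtain ⟨Sv, hSv, hle'⟩ := hloc.exists_sphere_power_le_of_crossing hX hT hu hv hSu hσu hσv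
      (hyx σ hσ₁) hsv hs.1 (hs.2.trans (min_le_right _ _))
    exact ⟨s, mem_iUnion₂.mpr ⟨v, Finset.mem_filter.mpr ⟨hv, Sv, hSv, hle'.trans hle⟩, hsv⟩,
      hs.1, hs.2.trans (min_le_left _ _)⟩
  obtain ⟨u, hu, hxu⟩ := mem_iUnion₂.mp (hwalk ⟨zero_le_one, le_rfl⟩)
  exact ⟨u, (Finset.mem_filter.mp hu).1, by simpa [γ] using hxu, (Finset.mem_filter.mp hu).2⟩

theorem power_nonneg_of_mem (hloc : IsLocallyDelaunay T) (hX : GenPos X)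
    (hT : IsTriangulation X T) (ht : t ∈ T) {S : Sphere Pt} (hS : ∀ w ∈ t, w ∈ S) {x : Pt}
    (hx : x ∈ X) : 0 ≤ S.power x := by
  -- such a `y` sends the walk from `y` to `x` through no point of `X` before `x`
  obtain ⟨y, hyt, hyX⟩ := isOpen_interior.exists_mem_forall_notMem_affineSpan_pair
    (by simp) (hT.interior_convexHull_nonempty hX ht) x X
  obtain ⟨u, hu, hxu, Su, hSu, hle⟩ := hloc.exists_sphere_power_le_of_segment hX hT ht hS
    (interior_subset hyt) (subset_convexHull ℝ _ (Finset.mem_coe.mpr hx))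
    fun s hs hsX => hyX _ hsX (mem_affineSpan_pair_of_lineMap_eq hs.ne rfl)
  have hx₀ := Sphere.power_eq_zero_of_mem (hSu x (hT.mem_of_mem_convexHull hX hu hx hxu))
  linarith

end IsLocallyDelaunay

theorem delaunay_lemma (X : Finset Pt) (T : Finset (Finset Pt))
    (hX : GenPos X) (hT : IsTriangulation X T) :
    (∀ t ∈ T, ∀ (c : Pt) (r : ℝ), (∀ v ∈ t, dist v c = r) →
        ∀ x ∈ X, dist x c < r → x ∈ t)
    ↔ (∀ t ∈ T, ∀ t' ∈ T, (t ∩ t').card = 2 →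
        ∀ (c : Pt) (r : ℝ), (∀ v ∈ t, dist v c = r) →
        ∀ v ∈ t', dist v c < r → v ∈ t) := by
  refine ⟨fun h t ht t' ht' _ c r hc v hv => h t ht c r hc v (hT.subset_of_mem ht' hv),
    fun hloc t ht c r hc x hx hlt => ?_⟩
  obtain ⟨a, ha⟩ := Finset.card_pos.mp (by rw [hT.card t ht]; norm_num : 0 < t.card)
  have hr : 0 ≤ r := hc a ha ▸ dist_nonneg
  have hpow := IsLocallyDelaunay.power_nonneg_of_mem (S := ⟨c, r⟩) hloc hX hT ht
    (fun w hw => mem_sphere.mpr (hc w hw)) hx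
  exact absurd hlt (not_lt.mpr ((Sphere.power_nonneg_iff_radius_le_dist_center hr).mp hpow))
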